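/- (Theorem 2, exact equal-elevation form.) Let J be a finite index set, let a_{H,j} ∈ ℂ^{M_H} for j ∈ J, and let a_V ∈ ℂ^{M_V} be a single common vector (the interfering users share the same elevation steering vector). Let H̃ be the |J|×(M_H·M_V) matrix whose rows are (a_{H,j} ⊗ a_V)^H, let H̃_H be the |J|×M_H matrix whose rows are a_{H,j}^H, and let H̃_V be the |J|×M_V matrix each of whose rows is a_V^H. Then the column space of the Gram matrix H̃^H·H̃ equals the ℂ-submodule of ℂ^{M_H·M_V} spanned by {x ⊗ y : x ∈ col(H̃_H^H·H̃_H), y ∈ col(H̃_V^H·H̃_V)}; that is, the column space of the multi-user interference Gram matrix is formed by the tensor product of the column spaces of the horizontal and vertical interference Gram matrices. -/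

import Mathlib

/-!
A Gram matrix `AᴴA` has the same rank as `Aᴴ` and its columns lie in `col(Aᴴ)`, so
`col(AᴴA) = col(Aᴴ)`, the span of the conjugated rows of `A`; for the three interference matrices
these are the steering vectors `a_{H,j} ⊗ a_V`, `a_{H,j}` and `a_V`. Since `⊗` is bilinear, the
span of `x ⊗ y` over `x ∈ span S`, `y ∈ span T` is the span of `S ⊗ T`, and with a single `a_V`
the products `a_{H,j} ⊗ a_V` are exactly those of the generators.
-/

open Matrix

/-- Kronecker (tensor) product of vectors: `(u ⊗ v)[(i−1)·n + j] = u[i]·v[j]`,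
indexed via `finProdFinEquiv : Fin m × Fin n ≃ Fin (m * n)`, `(i, j) ↦ j + n * i`. -/
def vecKron {m n : ℕ} (u : Fin m → ℂ) (v : Fin n → ℂ) : Fin (m * n) → ℂ :=
  fun k => u (finProdFinEquiv.symm k).1 * v (finProdFinEquiv.symm k).2

namespace Matrix

variable {J n R : Type*} [Fintype J] [Fintype n]
  [Field R] [PartialOrder R] [StarRing R] [StarOrderedRing R]

theorem range_mulVecLin_conjTranspose_mul_self (A : Matrix J n R) :
    LinearMap.range (Aᴴ * A).mulVecLin = LinearMap.range Aᴴ.mulVecLin := by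
  have hle : LinearMap.range (Aᴴ * A).mulVecLin ≤ LinearMap.range Aᴴ.mulVecLin := by
    rw [mulVecLin_mul]
    exact LinearMap.range_comp_le_range _ _
  refine Submodule.eq_of_le_of_finrank_le hle ?_
  have hrank : Aᴴ.rank = (Aᴴ * A).rank := by
    rw [rank_conjTranspose_mul_self, rank_conjTranspose]
  exact hrank.le

theorem range_mulVecLin_gram_of_star_rows (v : J → n → R) :
    LinearMap.range ((of fun j k => star (v j k))ᴴ * of fun j k => star (v j k)).mulVecLin =
      Submodule.span R (Set.range v) := by
  rw [range_mulVecLin_conjTranspose_mul_self, range_mulVecLin]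
  congr 2
  ext j k
  simp

end Matrix

def vecKronBilinear (m n : ℕ) : (Fin m → ℂ) →ₗ[ℂ] (Fin n → ℂ) →ₗ[ℂ] Fin (m * n) → ℂ :=
  LinearMap.mk₂ ℂ vecKron
    (fun _ _ _ => funext fun _ => add_mul _ _ _)
    (fun _ _ _ => funext fun _ => mul_assoc _ _ _)
    (fun _ _ _ => funext fun _ => mul_add _ _ _)
    (fun _ _ _ => funext fun _ => mul_left_comm _ _ _)

theorem span_vecKron_span_span {m n : ℕ} (s : Set (Fin m → ℂ)) (t : Set (Fin n → ℂ)) :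
    Submodule.span ℂ {w | ∃ x ∈ Submodule.span ℂ s, ∃ y ∈ Submodule.span ℂ t, w = vecKron x y} =
      Submodule.span ℂ (Set.image2 vecKron s t) :=
  calc Submodule.span ℂ {w | ∃ x ∈ Submodule.span ℂ s, ∃ y ∈ Submodule.span ℂ t, w = vecKron x y}
      = Submodule.map₂ (vecKronBilinear m n) (Submodule.span ℂ s) (Submodule.span ℂ t) := by
        rw [Submodule.map₂_eq_span_image2]
        congr 1
        ext w
        simp [Set.image2, eq_comm, vecKronBilinear]
    _ = Submodule.span ℂ (Set.image2 vecKron s t) := Submodule.map₂_span_span ℂ _ s t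

/-- Theorem 2 (exact equal-elevation form): when the interfering users share a common
vertical steering vector `a_V`, the column space of the Gram matrix `H̃^H·H̃` of the
interference matrix (rows `(a_{H,j} ⊗ a_V)^H`) equals the span of the Kronecker products
of vectors from the column spaces of the horizontal and vertical Gram matrices. -/
theorem stmt_9 (MH MV : ℕ) (J : Type) [Fintype J]
    (aH : J → Fin MH → ℂ) (aV : Fin MV → ℂ) :
    LinearMap.range
        (((Matrix.of fun (j : J) (k : Fin (MH * MV)) => star (vecKron (aH j) aV k))ᴴ *
          (Matrix.of fun (j : J) (k : Fin (MH * MV)) =>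
            star (vecKron (aH j) aV k))).mulVecLin) =
      Submodule.span ℂ
        {w : Fin (MH * MV) → ℂ |
          ∃ x ∈ LinearMap.range
            (((Matrix.of fun (j : J) (k : Fin MH) => star (aH j k))ᴴ *
              (Matrix.of fun (j : J) (k : Fin MH) => star (aH j k))).mulVecLin),
          ∃ y ∈ LinearMap.range
            (((Matrix.of fun (_ : J) (k : Fin MV) => star (aV k))ᴴ *
              (Matrix.of fun (_ : J) (k : Fin MV) => star (aV k))).mulVecLin),
          w = vecKron x y} := by
  open ComplexOrder in
  rw [range_mulVecLin_gram_of_star_rows (fun j => vecKron (aH j) aV),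
    range_mulVecLin_gram_of_star_rows aH, range_mulVecLin_gram_of_star_rows (fun _ : J => aV),
    span_vecKron_span_span]
  congr 1
  ext w
  simp only [Set.image2, Set.mem_range, Set.mem_ofPred_eq]
  exact ⟨fun ⟨j, hj⟩ => ⟨_, ⟨j, rfl⟩, _, ⟨j, rfl⟩, hj⟩,
    fun ⟨_, ⟨j, hx⟩, _, ⟨_, hy⟩, hw⟩ => ⟨j, hx ▸ hy ▸ hw⟩⟩
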